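/- arXiv:0910.5932 — 3 statements merged into one kernel-verified Lean document; each statement's English description precedes it below -/
import Mathlib

section
/- If W = I_d + U L Uᵀ where U ∈ ℝ^{d×k} has orthonormal columns (UᵀU = I_k) and L ∈ ℝ^{k×k} is symmetric with I_k + L positive definite, then D_ld(W, I_d) = D_ld(I_k + L, I_k). -/
open Matrix

/-- The LogDet divergence between two `d × d` real matrices:
`D_ld(W, W₀) = tr(W W₀⁻¹) − log det(W W₀⁻¹) − d`. -/
noncomputable def logDetDiv {d : ℕ} (W W₀ : Matrix (Fin d) (Fin d) ℝ) : ℝ :=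
  (W * W₀⁻¹).trace - Real.log ((W * W₀⁻¹).det) - d

theorem logDetDiv_identity_plus_low_rank {d k : ℕ}
    (U : Matrix (Fin d) (Fin k) ℝ) (hU : Uᵀ * U = 1)
    (L : Matrix (Fin k) (Fin k) ℝ) (hL : Lᵀ = L)
    (hpd : ((1 : Matrix (Fin k) (Fin k) ℝ) + L).PosDef) :
    logDetDiv (1 + U * L * Uᵀ) 1 = logDetDiv (1 + L) 1 := by
  have hdet : (1 + U * L * Uᵀ).det = (1 + L).det := by
    rw [Matrix.mul_assoc, Matrix.det_one_add_mul_comm, Matrix.mul_assoc, hU, mul_one]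
  have htr : (U * L * Uᵀ).trace = L.trace := by
    rw [Matrix.mul_assoc, Matrix.trace_mul_comm, Matrix.mul_assoc, hU, mul_one]
  simp only [logDetDiv, inv_one, mul_one, trace_add, trace_one, htr, hdet, Fintype.card_fin]
  ring
end

section
/- Let X = U Σ Vᵀ be a compact SVD of X ∈ ℝ^{d×n} with rank n (Σ ∈ ℝ^{n×n} invertible diagonal, UᵀU = I_n). Let f: ℝ → ℝ with f(η) = 0, extended to symmetric matrices via the spectrum. Then for any symmetric S ∈ ℝ^{n×n}, tr(f(η I_d + X S Xᵀ)) = tr(f(Σ Vᵀ S V Σ + η I_n)). -/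
/-!
Writing `M = Σ Vᵀ S V Σ`, we have `X S Xᵀ = U M Uᵀ`, and since `Uᵀ U = 1` the rectangular
identity `tⁿ χ_{AB}(t) = tᵈ χ_{BA}(t)` gives `χ_{U M Uᵀ}(t) = tᵈ⁻ⁿ χ_M(t)`. Shifting by
`η`, the spectrum of `η I_d + X S Xᵀ` is that of `M + η I_n` together with `d - n` extra copies
of `η`, which `f` sends to `0`.
-/

open Matrix

open Polynomial

namespace Matrix

variable {m n R : Type*} [Fintype m] [Fintype n] [DecidableEq n]

theorem card_le_card_of_mul_eq_one [CommSemiring R] [StrongRankCondition R]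
    {A : Matrix n m R} {B : Matrix m n R} (h : A * B = 1) : Fintype.card n ≤ Fintype.card m :=
  calc Fintype.card n = (A * B).rank := by rw [h, rank_one]
    _ ≤ A.rank := rank_mul_le_left A B
    _ ≤ Fintype.card m := rank_le_card_width A

theorem charpoly_mul_mul_of_mul_eq_one [DecidableEq m] [CommRing R] [StrongRankCondition R]
    {U : Matrix m n R} {W : Matrix n m R} (h : W * U = 1) (M : Matrix n n R) :
    (U * M * W).charpoly = X ^ (Fintype.card m - Fintype.card n) * M.charpoly := by
  rw [charpoly_mul_comm_of_le _ _ (card_le_card_of_mul_eq_one h), ← Matrix.mul_assoc, h,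
    Matrix.one_mul]

theorem charpoly_smul_one_add [CommRing R] (c : R) (A : Matrix n n R) :
    (c • (1 : Matrix n n R) + A).charpoly = A.charpoly.comp (X - C c) := by
  have : c • (1 : Matrix n n R) + A = A - scalar n (-c) := by
    rw [scalar_apply, ← smul_one_eq_diagonal, neg_smul, sub_neg_eq_add, add_comm]
  rw [this, charpoly_sub_scalar, map_neg, ← sub_eq_add_neg]

theorem charpoly_smul_one_add_mul_mul_of_mul_eq_one [DecidableEq m] [CommRing R]
    [StrongRankCondition R] {U : Matrix m n R} {W : Matrix n m R} (h : W * U = 1) (c : R)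
    (M : Matrix n n R) :
    (c • (1 : Matrix m m R) + U * M * W).charpoly
      = (X - C c) ^ (Fintype.card m - Fintype.card n) * (M + c • 1).charpoly := by
  rw [charpoly_smul_one_add, charpoly_mul_mul_of_mul_eq_one h, add_comm, charpoly_smul_one_add,
    mul_comp, X_pow_comp]

theorem IsHermitian.eigenvalues_eq_replicate_add [DecidableEq m] {A : Matrix m m ℝ}
    {B : Matrix n n ℝ} (hA : A.IsHermitian) (hB : B.IsHermitian) {c : ℝ} {k : ℕ}
    (h : A.charpoly = (X - C c) ^ k * B.charpoly) :
    Finset.univ.val.map hA.eigenvalues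
      = Multiset.replicate k c + Finset.univ.val.map hB.eigenvalues := by
  have hroots := congrArg roots h
  rw [roots_mul, roots_pow, roots_X_sub_C, hA.roots_charpoly_eq_eigenvalues,
    hB.roots_charpoly_eq_eigenvalues, Multiset.nsmul_singleton] at hroots
  · simpa [RCLike.ofReal_real_eq_id] using hroots
  · exact mul_ne_zero (pow_ne_zero _ (X_sub_C_ne_zero c)) (charpoly_monic B).ne_zero

theorem IsHermitian.sum_apply_eigenvalues_eq [DecidableEq m] {A : Matrix m m ℝ}
    {B : Matrix n n ℝ} (hA : A.IsHermitian) (hB : B.IsHermitian) {c : ℝ} {k : ℕ}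
    (h : A.charpoly = (X - C c) ^ k * B.charpoly) {f : ℝ → ℝ} (hf : f c = 0) :
    ∑ i, f (hA.eigenvalues i) = ∑ i, f (hB.eigenvalues i) := by
  have := congrArg (fun s => (s.map f).sum) (hA.eigenvalues_eq_replicate_add hB h)
  simpa [Multiset.map_map, hf] using this

end Matrix

theorem trace_spectral_function_reduction_general {d n : ℕ}
    (f : ℝ → ℝ) (η : ℝ) (hfη : f η = 0)
    (U : Matrix (Fin d) (Fin n) ℝ) (σ : Fin n → ℝ) (V : Matrix (Fin n) (Fin n) ℝ)
    (hU : Uᵀ * U = 1)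
    (X : Matrix (Fin d) (Fin n) ℝ) (hX : X = U * Matrix.diagonal σ * Vᵀ)
    (S : Matrix (Fin n) (Fin n) ℝ)
    (hA : (η • (1 : Matrix (Fin d) (Fin d) ℝ) + X * S * Xᵀ).IsHermitian)
    (hB : (Matrix.diagonal σ * Vᵀ * S * V * Matrix.diagonal σ
            + η • (1 : Matrix (Fin n) (Fin n) ℝ)).IsHermitian) :
    ∑ i, f (hA.eigenvalues i) = ∑ i, f (hB.eigenvalues i) := by
  have hXSX : X * S * Xᵀ = U * (diagonal σ * Vᵀ * S * V * diagonal σ) * Uᵀ := by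
    simp only [hX, transpose_mul, transpose_transpose, diagonal_transpose, Matrix.mul_assoc]
  refine hA.sum_apply_eigenvalues_eq hB (k := d - n) ?_ hfη
  rw [hXSX, charpoly_smul_one_add_mul_mul_of_mul_eq_one hU, Fintype.card_fin, Fintype.card_fin]

theorem trace_spectral_function_reduction {d n : ℕ}
    (f : ℝ → ℝ) (η : ℝ) (hfη : f η = 0)
    (U : Matrix (Fin d) (Fin n) ℝ) (σ : Fin n → ℝ) (V : Matrix (Fin n) (Fin n) ℝ)
    (hU : Uᵀ * U = 1) (hV : Vᵀ * V = 1) (hσ : ∀ i, σ i ≠ 0)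
    (X : Matrix (Fin d) (Fin n) ℝ) (hX : X = U * Matrix.diagonal σ * Vᵀ)
    (S : Matrix (Fin n) (Fin n) ℝ) (hS : Sᵀ = S)
    (hA : (η • (1 : Matrix (Fin d) (Fin d) ℝ) + X * S * Xᵀ).IsHermitian)
    (hB : (Matrix.diagonal σ * Vᵀ * S * V * Matrix.diagonal σ
            + η • (1 : Matrix (Fin n) (Fin n) ℝ)).IsHermitian) :
    ∑ i, f (hA.eigenvalues i) = ∑ i, f (hB.eigenvalues i) :=
  trace_spectral_function_reduction_general f η hfη U σ V hU X hX S hA hB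
end

section
/- Let f: ℝ → ℝ be convex with f ≥ 0 and f(η) = 0 for some η ≥ 0, extended spectrally to symmetric PSD matrices. Suppose W ⪰ 0 is a d×d matrix minimizing tr(f(W)) subject to constraints tr(W X Cᵢ Xᵀ) ≤ bᵢ, i = 1..m, where X ∈ ℝ^{d×n}. Then there exists an optimal solution of the form W* = η I_d + X S* Xᵀ for some symmetric S* ∈ ℝ^{n×n}. -/
open Matrix

/-- The trace of the spectral extension of `f : ℝ → ℝ` applied to a Hermitian
real matrix `W`, i.e. `tr(f(W)) = ∑ⱼ f(λⱼ)`. -/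
noncomputable def spectralTrace (f : ℝ → ℝ) {n : ℕ} {W : Matrix (Fin n) (Fin n) ℝ}
    (hW : W.IsHermitian) : ℝ :=
  ∑ i, f (hW.eigenvalues i)

/-!
Let `P` be the orthogonal projection onto the column space of `X` and replace `W` by its
compression `W̃ = η I + P (W - η I) P = P W P + η (I - P)`. It is PSD, it has the same constraint
values as `W` because every `X Cᵢ Xᵀ` is fixed by `P` on both sides, and it has the form
`η I + X S Xᵀ` because `P (W - η I) P` lives on the column space of `X`.

For the objective, write `W = U diag(λ) Uᵀ`, `W̃ = V diag(μ) Vᵀ` and `Q = Uᵀ P V`. Then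
`μⱼ = η + ∑ₖ Qₖⱼ² (λₖ - η)`, and the weights `Qₖⱼ²` have row and column sums at most `1`
(they are diagonal entries of the projections `Vᵀ P V` and `Uᵀ P U`). Jensen's inequality,
together with `f η = 0` and `f ≥ 0`, gives `∑ⱼ f(μⱼ) ≤ ∑ₖ f(λₖ)`, so `W̃` is optimal as well.
-/

open Finset Set

theorem ConvexOn.map_add_sum_mul_sub_le {ι : Type*} [Fintype ι] {f : ℝ → ℝ}
    (hf : ConvexOn ℝ univ f) {η : ℝ} (hfη : f η = 0) {a : ι → ℝ} (ha : ∀ k, 0 ≤ a k)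
    (hsum : ∑ k, a k ≤ 1) (x : ι → ℝ) :
    f (η + ∑ k, a k * (x k - η)) ≤ ∑ k, a k * f (x k) := by
  have h := hf.map_add_sum_le (t := Finset.univ) (p := x) (q := η) (fun k _ => ha k)
    (sub_add_cancel _ _) (fun k _ => mem_univ _) (sub_nonneg.mpr hsum) (mem_univ _)
  simp only [smul_eq_mul, hfη, mul_zero, zero_add] at h
  refine le_of_eq_of_le (congrArg f ?_) h
  simp only [mul_sub, sum_sub_distrib, ← sum_mul]
  ring

theorem ConvexOn.sum_map_le_of_substochastic {ι κ : Type*} [Fintype ι] [Fintype κ]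
    {f : ℝ → ℝ} (hf : ConvexOn ℝ univ f) (hnn : ∀ x, 0 ≤ f x) {η : ℝ} (hfη : f η = 0)
    {a : ι → κ → ℝ} (ha : ∀ j k, 0 ≤ a j k) (hrow : ∀ j, ∑ k, a j k ≤ 1)
    (hcol : ∀ k, ∑ j, a j k ≤ 1) (x : κ → ℝ) :
    ∑ j, f (η + ∑ k, a j k * (x k - η)) ≤ ∑ k, f (x k) :=
  calc ∑ j, f (η + ∑ k, a j k * (x k - η))
      ≤ ∑ j, ∑ k, a j k * f (x k) :=
        sum_le_sum fun j _ => hf.map_add_sum_mul_sub_le hfη (ha j) (hrow j) x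
    _ = ∑ k, (∑ j, a j k) * f (x k) := by
        rw [sum_comm]; simp only [sum_mul]
    _ ≤ ∑ k, f (x k) := sum_le_sum fun k _ => mul_le_of_le_one_left (hnn _) (hcol k)

theorem IsStarProjection.matrix_apply_self_le_one {n : Type*} [Fintype n]
    {P : Matrix n n ℝ} (hP : IsStarProjection P) (j : n) : P j j ≤ 1 := by
  have hsymm : ∀ k, P j k = P k j := fun k => by
    simpa using congrFun (congrFun hP.isSelfAdjoint.star_eq k) j
  have hsq : P j j = ∑ k, P k j ^ 2 := by
    conv_lhs => rw [← hP.isIdempotentElem.eq]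
    simp only [mul_apply, hsymm, sq]
  have : P j j ^ 2 ≤ P j j := hsq ▸ single_le_sum (fun k _ => sq_nonneg (P k j)) (mem_univ j)
  nlinarith

theorem IsStarProjection.sum_sq_unitary_conj_apply_le_one {n : Type*} [Fintype n]
    [DecidableEq n] {P Y Z : Matrix n n ℝ} (hP : IsStarProjection P)
    (hY : Y ∈ unitaryGroup n ℝ) (hZ : Z ∈ unitaryGroup n ℝ) (j : n) :
    ∑ k, (star Y * P * Z) k j ^ 2 ≤ 1 := by
  have hproj : IsStarProjection (star Z * P * Z) := by
    simpa using hP.map (Unitary.conjStarAlgAut ℝ _ (star ⟨Z, hZ⟩))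
  have hgram : (star Y * P * Z)ᵀ * (star Y * P * Z) = star Z * P * Z := by
    rw [← conjTranspose_eq_transpose_of_trivial, ← star_eq_conjTranspose]
    simp only [star_mul, star_star, hP.isSelfAdjoint.star_eq, Matrix.mul_assoc]
    rw [← Matrix.mul_assoc Y, Unitary.mul_star_self_of_mem hY, Matrix.one_mul,
      ← Matrix.mul_assoc P P, hP.isIdempotentElem.eq]
  have h := hproj.matrix_apply_self_le_one j
  rw [← hgram, mul_apply] at h
  simpa only [transpose_apply, sq] using h

theorem IsStarProjection.mul_of_mul_mul_eq {R : Type*} [Ring R] [StarRing R] {G A : R}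
    (hG : IsSelfAdjoint G) (hA : IsSelfAdjoint A) (hc : Commute G A) (h : G * A * G = G) :
    IsStarProjection (G * A) where
  isIdempotentElem := by rw [IsIdempotentElem, ← mul_assoc, h]
  isSelfAdjoint := (hG.commute_iff hA).mp hc

/-- The witness is `cfc (·⁻¹) G`: as `0⁻¹ = 0` in `ℝ`, this inverts `G` on its range and
vanishes on its kernel. -/
theorem Matrix.IsHermitian.exists_pseudoinverse {n 𝕜 : Type*} [Fintype n] [DecidableEq n]
    [RCLike 𝕜] {G : Matrix n n 𝕜} (hG : G.IsHermitian) :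
    ∃ R : Matrix n n 𝕜, R.IsHermitian ∧ Commute G R ∧ G * R * G = G := by
  have hcont : ∀ g : ℝ → ℝ, ContinuousOn g (spectrum ℝ G) := fun g =>
    G.finite_real_spectrum.continuousOn g
  have hid : cfc (fun x : ℝ => x) G = G := cfc_id' ℝ G hG.isSelfAdjoint
  refine ⟨cfc (·⁻¹ : ℝ → ℝ) G, cfc_predicate _ _, ?_, ?_⟩
  · simpa only [hid] using cfc_commute_cfc (fun x : ℝ => x) (·⁻¹) G
  · have h := cfc_congr (a := G) (g := fun x : ℝ => x) fun x _ => mul_inv_mul_cancel x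
    rwa [cfc_mul _ _ _ (hcont _) (hcont _), cfc_mul _ _ _ (hcont _) (hcont _), hid] at h

open scoped ComplexOrder in
theorem Matrix.exists_isStarProjection_mul_eq_self_and_compression_eq {m n 𝕜 : Type*}
    [Fintype m] [DecidableEq m] [Fintype n] [RCLike 𝕜] (X : Matrix m n 𝕜) :
    ∃ P : Matrix m m 𝕜, IsStarProjection P ∧ P * X = X ∧
      ∀ M : Matrix m m 𝕜, M.IsHermitian →
        ∃ S : Matrix n n 𝕜, S.IsHermitian ∧ X * S * Xᴴ = P * M * P := by
  have hG := isHermitian_mul_conjTranspose_self X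
  obtain ⟨R, hR, hcomm, hGRG⟩ := hG.exists_pseudoinverse
  refine ⟨X * Xᴴ * R, .mul_of_mul_mul_eq hG hR hcomm hGRG, ?_, fun M hM => ?_⟩
  · have h : (1 - X * Xᴴ * R) * (X * Xᴴ) = 0 := by rw [sub_mul, one_mul, hGRG, sub_self]
    have h' := (mul_self_mul_conjTranspose_eq_zero X _).mp h
    rw [Matrix.sub_mul, Matrix.one_mul, sub_eq_zero] at h'
    exact h'.symm
  refine ⟨Xᴴ * R * M * R * X, ?_, ?_⟩
  · simp [IsHermitian, hR.eq, hM.eq, Matrix.mul_assoc]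
  · calc X * (Xᴴ * R * M * R * X) * Xᴴ = X * Xᴴ * R * M * (R * (X * Xᴴ)) := by
          simp only [Matrix.mul_assoc]
      _ = X * Xᴴ * R * M * (X * Xᴴ * R) := by rw [hcomm.eq]

theorem Matrix.PosSemidef.smul_one_add_compression {n R : Type*} [Fintype n] [DecidableEq n]
    [CommRing R] [PartialOrder R] [StarRing R] [StarOrderedRing R] {W P : Matrix n n R}
    (hW : W.PosSemidef) (hP : IsStarProjection P) {η : R} (hη : 0 ≤ η) :
    (η • 1 + P * (W - η • 1) * P).PosSemidef := by
  have hPh : Pᴴ = P := hP.isSelfAdjoint.star_eq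
  have h : η • 1 + P * (W - η • 1) * P = P * W * Pᴴ + η • ((1 - P) * (1 - P)ᴴ) := by
    rw [conjTranspose_sub, conjTranspose_one, hPh, hP.one_sub.isIdempotentElem.eq,
      Matrix.mul_sub, Matrix.sub_mul, Matrix.mul_smul, Matrix.mul_one, Matrix.smul_mul,
      hP.isIdempotentElem.eq, smul_sub]
    abel
  rw [h]
  exact (hW.mul_mul_conjTranspose_same P).add ((posSemidef_self_mul_conjTranspose _).smul hη)

theorem Matrix.trace_smul_one_add_compression_mul {n R : Type*} [Fintype n] [DecidableEq n]
    [CommRing R] {W P K : Matrix n n R} (η : R) (hPK : P * K = K) (hKP : K * P = K) :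
    trace ((η • 1 + P * (W - η • 1) * P) * K) = trace (W * K) := by
  rw [Matrix.add_mul, Matrix.mul_assoc _ P K, hPK, trace_add, Matrix.mul_assoc, trace_mul_comm P,
    Matrix.mul_assoc, hKP]
  simp [Matrix.sub_mul, trace_sub]

theorem Matrix.IsHermitian.star_eigenvectorUnitary_mul_mul_eq_diagonal {n : Type*} [Fintype n]
    [DecidableEq n] {A : Matrix n n ℝ} (hA : A.IsHermitian) :
    star (hA.eigenvectorUnitary : Matrix n n ℝ) * A * hA.eigenvectorUnitary =
      diagonal hA.eigenvalues := by
  simpa using hA.conjStarAlgAut_star_eigenvectorUnitary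

theorem Matrix.IsHermitian.sub_smul_one_eq_mul_diagonal_mul {n : Type*} [Fintype n]
    [DecidableEq n] {W : Matrix n n ℝ} (hW : W.IsHermitian) (η : ℝ) :
    W - η • 1 = (hW.eigenvectorUnitary : Matrix n n ℝ) *
      diagonal (fun i => hW.eigenvalues i - η) * star (hW.eigenvectorUnitary : Matrix n n ℝ) := by
  conv_lhs => rw [hW.spectral_theorem]
  rw [← diagonal_sub, ← smul_one_eq_diagonal]
  simp [mul_sub, sub_mul]

theorem spectralTrace_smul_one_add_compression_le {d : ℕ} {f : ℝ → ℝ}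
    (hf : ConvexOn ℝ univ f) (hnn : ∀ x, 0 ≤ f x) {η : ℝ} (hfη : f η = 0)
    {W A P : Matrix (Fin d) (Fin d) ℝ} (hW : W.IsHermitian) (hA : A.IsHermitian)
    (hP : IsStarProjection P) (hAeq : A = η • 1 + P * (W - η • 1) * P) :
    spectralTrace f hA ≤ spectralTrace f hW := by
  set U := hW.eigenvectorUnitary
  set V := hA.eigenvectorUnitary
  have hVAV : star (V : Matrix (Fin d) (Fin d) ℝ) * A * V = diagonal hA.eigenvalues :=
    hA.star_eigenvectorUnitary_mul_mul_eq_diagonal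
  have hWU : W - η • 1 = U * diagonal (fun k => hW.eigenvalues k - η) *
      star (U : Matrix (Fin d) (Fin d) ℝ) :=
    hW.sub_smul_one_eq_mul_diagonal_mul η
  clear_value U V
  set Q : Matrix (Fin d) (Fin d) ℝ := star (U : Matrix (Fin d) (Fin d) ℝ) * P * V
  have hQt : Qᵀ = star (V : Matrix (Fin d) (Fin d) ℝ) * P * U := by
    rw [← conjTranspose_eq_transpose_of_trivial, ← star_eq_conjTranspose]
    simp [Q, hP.isSelfAdjoint.star_eq, Matrix.mul_assoc]
  have hrow : ∀ j, ∑ k, Q k j ^ 2 ≤ 1 := hP.sum_sq_unitary_conj_apply_le_one U.2 V.2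
  have hcol : ∀ k, ∑ j, Q k j ^ 2 ≤ 1 := fun k => by
    simpa only [← hQt, transpose_apply] using hP.sum_sq_unitary_conj_apply_le_one V.2 U.2 k
  have hdiag : diagonal hA.eigenvalues =
      η • 1 + Qᵀ * diagonal (fun k => hW.eigenvalues k - η) * Q := by
    rw [← hVAV, hQt, hAeq, hWU]
    simp [Q, Matrix.mul_add, Matrix.add_mul, Matrix.mul_assoc]
  have hμ : ∀ j, hA.eigenvalues j = η + ∑ k, Q k j ^ 2 * (hW.eigenvalues k - η) := fun j => by
    have h := congrFun (congrFun hdiag j) j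
    simp only [diagonal_apply_eq, Matrix.add_apply, Matrix.smul_apply, one_apply_eq, smul_eq_mul,
      mul_one, mul_apply, transpose_apply, diagonal_apply, mul_ite, mul_zero, sum_ite_eq',
      Finset.mem_univ, if_true] at h
    rw [h]
    exact congrArg _ (sum_congr rfl fun k _ => by ring)
  simpa only [spectralTrace, hμ] using
    hf.sum_map_le_of_substochastic hnn hfη (fun j k => sq_nonneg (Q k j)) hrow hcol hW.eigenvalues

theorem representer_theorem_spectral_loss {d n m : ℕ}
    (f : ℝ → ℝ) (hconv : ConvexOn ℝ Set.univ f) (hnn : ∀ x, 0 ≤ f x)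
    (η : ℝ) (hη : 0 ≤ η) (hfη : f η = 0)
    (X : Matrix (Fin d) (Fin n) ℝ)
    (C : Fin m → Matrix (Fin n) (Fin n) ℝ) (b : Fin m → ℝ)
    (W : Matrix (Fin d) (Fin d) ℝ) (hW : W.PosSemidef)
    (hfeas : ∀ i, (W * (X * C i * Xᵀ)).trace ≤ b i)
    (hopt : ∀ (W' : Matrix (Fin d) (Fin d) ℝ) (hW' : W'.PosSemidef),
      (∀ i, (W' * (X * C i * Xᵀ)).trace ≤ b i) →
      spectralTrace f hW.1 ≤ spectralTrace f hW'.1) :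
    ∃ S : Matrix (Fin n) (Fin n) ℝ, Sᵀ = S ∧
      ∃ hWs : (η • (1 : Matrix (Fin d) (Fin d) ℝ) + X * S * Xᵀ).PosSemidef,
        (∀ i, ((η • (1 : Matrix (Fin d) (Fin d) ℝ) + X * S * Xᵀ)
            * (X * C i * Xᵀ)).trace ≤ b i) ∧
        spectralTrace f hWs.1 = spectralTrace f hW.1 := by
  obtain ⟨P, hP, hPX, hfactor⟩ := exists_isStarProjection_mul_eq_self_and_compression_eq X
  obtain ⟨S, hS, hXSX⟩ := hfactor (W - η • 1) (hW.1.sub (isHermitian_one.smul (.all η)))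
  rw [conjTranspose_eq_transpose_of_trivial] at hXSX
  have hA : η • 1 + X * S * Xᵀ = η • 1 + P * (W - η • 1) * P := by rw [hXSX]
  have hXP : Xᵀ * P = Xᵀ := by
    have hPt : Pᵀ = P := by simpa [star_eq_conjTranspose] using hP.isSelfAdjoint.star_eq
    simpa [transpose_mul, hPt] using congrArg transpose hPX
  have hAfeas : ∀ i, ((η • 1 + X * S * Xᵀ) * (X * C i * Xᵀ)).trace ≤ b i := fun i => by
    rw [hA, trace_smul_one_add_compression_mul η
      (by rw [← Matrix.mul_assoc, ← Matrix.mul_assoc, hPX]) (by rw [Matrix.mul_assoc, hXP])]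
    exact hfeas i
  have hApsd : (η • 1 + X * S * Xᵀ).PosSemidef := hA ▸ hW.smul_one_add_compression hP hη
  refine ⟨S, by simpa using hS.eq, hApsd, hAfeas, le_antisymm ?_ (hopt _ hApsd hAfeas)⟩
  exact spectralTrace_smul_one_add_compression_le hconv hnn hfη hW.1 hApsd.1 hP hA
end
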